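/- Let 𝓗 be a complex Hilbert space (inner product conjugate-linear in the first variable), and let H, A, B, E, F be bounded linear operators on 𝓗 with H self-adjoint. Suppose the commutator inequality: for every v ∈ 𝓗, Re⟨v, i(A*A H − H A*A) v⟩ ≥ ‖B v‖² + Re⟨v, E v⟩ + Re⟨v, F v⟩. Then for every λ ∈ ℝ, t > 0, and f ∈ 𝓗, setting u = (H − (λ+it))⁻¹ f, one has ‖B u‖² + 2t ‖A u‖² ≤ |⟨u, E u⟩| + |⟨u, F u⟩| + 2 |⟨u, A*A f⟩|. -/

import Mathlib

/-!
Write `z = λ + it` and `u = (H - z)⁻¹ f`, so that `H u = f + z u`. Substituting this into both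
terms of the commutator and using that `H` and `A*A` are self-adjoint gives
`Re⟨u, i[A*A, H] u⟩ = -2 Im⟨u, A*A f⟩ - 2t‖Au‖²`: the `f`-terms are a number minus its conjugate,
and the `z`-terms leave `z - z̄ = 2it`. Inserting this into the commutator inequality at `v = u`
and bounding real and imaginary parts by absolute values gives the estimate. The resolvent exists
because the spectrum of a self-adjoint operator is real.
-/

open ContinuousLinearMap ComplexConjugate

theorem IsSelfAdjoint.isUnit_sub_smul_one {A : Type*} [CStarAlgebra A] {a : A}
    (ha : IsSelfAdjoint a) {z : ℂ} (hz : z.im ≠ 0) : IsUnit (a - z • 1) := by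
  have hz_notMem : z ∉ spectrum ℂ a := fun hmem => hz (ha.im_eq_zero_of_mem_spectrum hmem)
  rw [← neg_sub, ← Algebra.algebraMap_eq_smul_one]
  exact (spectrum.notMem_iff.mp hz_notMem).neg

theorem re_inner_I_smul_commutator_of_sub_smul_one_apply_eq {𝓗 : Type*}
    [NormedAddCommGroup 𝓗] [InnerProductSpace ℂ 𝓗] [CompleteSpace 𝓗] {H T : 𝓗 →L[ℂ] 𝓗}
    (hH : IsSelfAdjoint H) (hT : IsSelfAdjoint T) {z : ℂ} {u f : 𝓗}
    (hu : (H - z • (1 : 𝓗 →L[ℂ] 𝓗)) u = f) :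
    (inner ℂ u ((Complex.I • (T * H - H * T)) u)).re
      = -2 * (inner ℂ u (T f)).im - 2 * z.im * (inner ℂ u (T u)).re := by
  have hHu : H u = f + z • u := by
    rw [← hu, sub_apply, smul_apply, one_apply_eq_self, sub_add_cancel]
  have hHsymm : ∀ v w : 𝓗, inner ℂ v (H w) = inner ℂ (H v) w :=
    fun v w => by rw [← adjoint_inner_right, hH.adjoint_eq]
  have hTf : inner ℂ f (T u) = conj (inner ℂ u (T f)) := by
    rw [← adjoint_inner_left, hT.adjoint_eq, inner_conj_symm]
  have hexpand : inner ℂ u ((Complex.I • (T * H - H * T)) u)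
      = Complex.I * ((inner ℂ u (T f) - conj (inner ℂ u (T f)))
          + (z - conj z) * inner ℂ u (T u)) := by
    rw [smul_apply, sub_apply, mul_apply_eq_comp, mul_apply_eq_comp,
      inner_smul_right, inner_sub_right, hHsymm, hHu, map_add, map_smul, inner_add_right,
      inner_smul_right, inner_add_left, inner_smul_left, hTf]
    ring
  rw [hexpand, Complex.sub_conj, Complex.sub_conj]
  simp only [Complex.mul_re, Complex.mul_im, Complex.add_re, Complex.add_im, Complex.ofReal_re,
    Complex.ofReal_im, Complex.I_re, Complex.I_im]
  ring

/-- Abstract positive commutator estimate: if `H` is bounded self-adjoint on a complex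
Hilbert space and `Re⟨v, i(A*A H − H A*A) v⟩ ≥ ‖Bv‖² + Re⟨v,Ev⟩ + Re⟨v,Fv⟩` for all `v`,
then for `λ ∈ ℝ`, `t > 0`, `f ∈ 𝓗` and `u = (H−(λ+it))⁻¹ f`:
`‖Bu‖² + 2t‖Au‖² ≤ |⟨u,Eu⟩| + |⟨u,Fu⟩| + 2|⟨u,A*A f⟩|`. -/
theorem positive_commutator_estimate
    {𝓗 : Type*} [NormedAddCommGroup 𝓗] [InnerProductSpace ℂ 𝓗] [CompleteSpace 𝓗]
    (H A B E F : 𝓗 →L[ℂ] 𝓗) (hH : IsSelfAdjoint H)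
    (hcomm : ∀ v : 𝓗,
      ‖B v‖ ^ 2 + (inner ℂ v (E v) : ℂ).re + (inner ℂ v (F v) : ℂ).re ≤
        (inner ℂ v ((Complex.I • (adjoint A * A * H - H * (adjoint A * A))) v) : ℂ).re)
    (lam t : ℝ) (ht : 0 < t) (f : 𝓗) :
    IsUnit (H - ((lam : ℂ) + (t : ℂ) * Complex.I) • (1 : 𝓗 →L[ℂ] 𝓗)) ∧
    ∀ u : 𝓗, (H - ((lam : ℂ) + (t : ℂ) * Complex.I) • (1 : 𝓗 →L[ℂ] 𝓗)) u = f →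
      ‖B u‖ ^ 2 + 2 * t * ‖A u‖ ^ 2 ≤
        ‖inner ℂ u (E u)‖ + ‖inner ℂ u (F u)‖ +
          2 * ‖inner ℂ u ((adjoint A * A) f)‖ := by
  have him : ((lam : ℂ) + (t : ℂ) * Complex.I).im = t := by simp
  refine ⟨hH.isUnit_sub_smul_one (by rw [him]; exact ht.ne'), fun u hu => ?_⟩
  have hAstarA : IsSelfAdjoint (adjoint A * A) := IsSelfAdjoint.star_mul_self A
  have hidentity := re_inner_I_smul_commutator_of_sub_smul_one_apply_eq hH hAstarA hu
  have hAu : ‖A u‖ ^ 2 = (inner ℂ u ((adjoint A * A) u)).re :=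
    apply_norm_sq_eq_inner_adjoint_right A u
  have hE := neg_le_of_abs_le (Complex.abs_re_le_norm (inner ℂ u (E u)))
  have hF := neg_le_of_abs_le (Complex.abs_re_le_norm (inner ℂ u (F u)))
  have hAf := neg_le_of_abs_le (Complex.abs_im_le_norm (inner ℂ u ((adjoint A * A) f)))
  rw [him, ← hAu] at hidentity
  linarith [hcomm u]
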